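/- arXiv:2210.11838 — 3 statements merged into one kernel-verified Lean document; each statement's English description precedes it below -/
import Mathlib

section
/- If S is an LPDS of the king grid with matching partner map m, then for every v ∈ S, the interval neighborhood I(v) = N(v) ∩ N(m(v)) contains no vertex of T₁ and at most one vertex of T₂, where Tᵢ = {u ∈ V\S : |N(u) ∩ S| = i}. -/
/-- The king grid on `ℤ × ℤ`: distinct vertices are adjacent iff both
coordinates differ by at most 1 (equivalently, Euclidean distance ≤ √2). -/
def kingGrid : SimpleGraph (ℤ × ℤ) where
  Adj u v := u ≠ v ∧ |u.1 - v.1| ≤ 1 ∧ |u.2 - v.2| ≤ 1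
  symm := ⟨by
    rintro u v ⟨h, h1, h2⟩
    refine ⟨h.symm, ?_, ?_⟩ <;> rw [abs_sub_comm] <;> assumption⟩
  loopless := ⟨fun v h => h.1 rfl⟩

/-- Open neighborhood in the king grid. -/
def N (v : ℤ × ℤ) : Set (ℤ × ℤ) := kingGrid.neighborSet v

/-- Closed neighborhood in the king grid. -/
def Ncl (v : ℤ × ℤ) : Set (ℤ × ℤ) := insert v (kingGrid.neighborSet v)

/-- `S` is a dominating set of the king grid. -/
def IsDominating (S : Set (ℤ × ℤ)) : Prop := ∀ u : ℤ × ℤ, (Ncl u ∩ S).Nonempty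

/-- `S` is locating: distinct vertices outside `S` have distinct neighborhoods in `S`. -/
def IsLocating (S : Set (ℤ × ℤ)) : Prop :=
  ∀ u v : ℤ × ℤ, u ∉ S → v ∉ S → u ≠ v → N u ∩ S ≠ N v ∩ S

/-- `m` is the partner map of a perfect matching of the induced subgraph on `S`. -/
def IsPartnerMap (S : Set (ℤ × ℤ)) (m : ℤ × ℤ → ℤ × ℤ) : Prop :=
  ∀ v ∈ S, m v ∈ S ∧ kingGrid.Adj v (m v) ∧ m (m v) = v

/-- `S` is a locating-paired-dominating set with matching partner map `m`. -/
def IsLPDS (S : Set (ℤ × ℤ)) (m : ℤ × ℤ → ℤ × ℤ) : Prop :=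
  IsDominating S ∧ IsLocating S ∧ IsPartnerMap S m

/-- Pendant neighbors of `v` (relative to the partner map `m`). -/
def P (m : ℤ × ℤ → ℤ × ℤ) (v : ℤ × ℤ) : Set (ℤ × ℤ) := N v \ Ncl (m v)

/-- Interval neighbors of `v` (relative to the partner map `m`). -/
def I (m : ℤ × ℤ → ℤ × ℤ) (v : ℤ × ℤ) : Set (ℤ × ℤ) := N v ∩ N (m v)

/-! A common neighbour `u` of the matched pair `v, m v` already sees both of them in `S`, so
`|N(u) ∩ S| ≥ 2`; if equality holds then `N(u) ∩ S = {v, m v}`, and the locating property allows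
only one vertex outside `S` with that trace. -/

lemma N_finite (u : ℤ × ℤ) : (N u).Finite := by
  apply ((Set.finite_Icc (u.1 - 1) (u.1 + 1)).prod (Set.finite_Icc (u.2 - 1) (u.2 + 1))).subset
  rintro ⟨a, b⟩ ⟨-, h1, h2⟩
  rw [abs_le] at h1 h2
  constructor <;> simp <;> omega

section CommonNeighbor

variable {S : Set (ℤ × ℤ)} {a b u : ℤ × ℤ}

lemma pair_subset_N_inter (ha : a ∈ S) (hb : b ∈ S) (hua : u ∈ N a) (hub : u ∈ N b) :
    ({a, b} : Set (ℤ × ℤ)) ⊆ N u ∩ S := by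
  rintro x (rfl | rfl)
  · exact ⟨kingGrid.adj_symm hua, ha⟩
  · exact ⟨kingGrid.adj_symm hub, hb⟩

lemma two_le_ncard_N_inter (hab : a ≠ b) (ha : a ∈ S) (hb : b ∈ S) (hua : u ∈ N a)
    (hub : u ∈ N b) : 2 ≤ (N u ∩ S).ncard :=
  calc 2 = ({a, b} : Set (ℤ × ℤ)).ncard := (Set.ncard_pair hab).symm
    _ ≤ (N u ∩ S).ncard :=
      Set.ncard_le_ncard (pair_subset_N_inter ha hb hua hub) ((N_finite u).inter_of_left S)

lemma N_inter_eq_pair (hab : a ≠ b) (ha : a ∈ S) (hb : b ∈ S) (hua : u ∈ N a)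
    (hub : u ∈ N b) (hcard : (N u ∩ S).ncard = 2) : N u ∩ S = {a, b} :=
  (Set.eq_of_subset_of_ncard_le (pair_subset_N_inter ha hb hua hub)
    (by rw [hcard, Set.ncard_pair hab]) ((N_finite u).inter_of_left S)).symm

end CommonNeighbor

theorem lpds_interval_T1_T2 (S : Set (ℤ × ℤ)) (m : ℤ × ℤ → ℤ × ℤ)
    (h : IsLPDS S m) (v : ℤ × ℤ) (hv : v ∈ S) :
    I m v ∩ {u | u ∉ S ∧ (N u ∩ S).ncard = 1} = ∅ ∧
    (I m v ∩ {u | u ∉ S ∧ (N u ∩ S).ncard = 2}).Subsingleton := by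
  obtain ⟨-, hloc, hpm⟩ := h
  obtain ⟨hmS, hadj, -⟩ := hpm v hv
  constructor
  · refine Set.eq_empty_iff_forall_notMem.2 ?_
    rintro u ⟨⟨huv, hum⟩, -, hcard⟩
    have := two_le_ncard_N_inter hadj.ne hv hmS huv hum
    omega
  · rintro u ⟨⟨huv, hum⟩, huS, hu2⟩ w ⟨⟨hwv, hwm⟩, hwS, hw2⟩
    by_contra huw
    exact hloc u w huS hwS huw <| by
      rw [N_inter_eq_pair hadj.ne hv hmS huv hum hu2, N_inter_eq_pair hadj.ne hv hmS hwv hwm hw2]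
end

section
/- The map X ↦ L_X from subsets of ℤ to subsets of ℤ×ℤ, defined by L_X = {a + k₁·(9,0) + k₂·(0,4) + 1_X(k₁)·(0,1) : a ∈ L₀, (k₁,k₂) ∈ ℤ²} with L₀ = {(0,0),(0,3),(2,2),(3,1),(4,3),(5,0),(7,1),(7,2)} and 1_X the indicator function of X, is injective. Consequently there exist uncountably many distinct sets of the form L_X. -/
def L0 : Set (ℤ × ℤ) :=
  {(0,0), (0,3), (2,2), (3,1), (4,3), (5,0), (7,1), (7,2)}

def LX (X : Set ℤ) : Set (ℤ × ℤ) :=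
  {p | ∃ a ∈ L0, ∃ k1 k2 : ℤ,
    p = a + k1 • ((9:ℤ), (0:ℤ)) + k2 • ((0:ℤ), (4:ℤ))
        + X.indicator (fun _ => ((0:ℤ), (1:ℤ))) k1}

open Function Set

theorem uncountable_set_of_infinite (α : Type*) [Infinite α] : Uncountable (Set α) := by
  refine ⟨fun hcount => ?_⟩
  obtain ⟨e, he⟩ := countable_iff_exists_injective (Set α) |>.mp hcount
  exact cantor_injective (Infinite.natEmbedding α ∘ e)
    ((Infinite.natEmbedding α).injective.comp he)

theorem not_countable_range_of_injective {α β : Type*} [Uncountable α] {f : α → β}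
    (hf : Injective f) : ¬ (range f).Countable := fun h =>
  not_countable_univ ((mapsTo_range f univ).countable_of_injOn hf.injOn h)

open scoped Classical in
theorem mem_LX_iff (X : Set ℤ) (p : ℤ × ℤ) :
    p ∈ LX X ↔ ∃ a ∈ L0, ∃ k₁ k₂ : ℤ,
      p.1 = a.1 + 9 * k₁ ∧ p.2 = a.2 + 4 * k₂ + if k₁ ∈ X then 1 else 0 := by
  simp only [LX, mem_ofPred_eq, Prod.ext_iff, Prod.fst_add, Prod.snd_add, Prod.smul_mk, smul_eq_mul,
    indicator_apply]
  refine exists_congr fun a => and_congr_right fun _ => exists₂_congr fun k₁ k₂ => ?_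
  split_ifs <;> simp [mul_comm]

/-- Of all translates of `L0`, only the copy of `(2, 2)` in column block `k`, raised by the
flag `1_X(k)`, reaches `(2 + 9 k, 3)`. -/
theorem marker_mem_LX_iff (X : Set ℤ) (k : ℤ) : ((2 + 9 * k, 3) : ℤ × ℤ) ∈ LX X ↔ k ∈ X := by
  classical
  rw [mem_LX_iff]
  constructor
  · rintro ⟨a, ha, k₁, k₂, h₁, h₂⟩
    simp only [L0, mem_insert_iff, mem_singleton_iff] at ha
    have hk : k₁ = k := by
      rcases ha with rfl | rfl | rfl | rfl | rfl | rfl | rfl | rfl <;> omega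
    subst hk
    by_contra hk
    rw [if_neg hk] at h₂
    rcases ha with rfl | rfl | rfl | rfl | rfl | rfl | rfl | rfl <;> omega
  · intro hk
    exact ⟨(2, 2), by simp [L0], k, 0, rfl, by simp [hk]⟩

theorem LX_injective :
    Function.Injective LX ∧ ¬ (Set.range LX).Countable := by
  have hinj : Injective LX := fun X Y h => by
    ext k
    rw [← marker_mem_LX_iff X k, ← marker_mem_LX_iff Y k, h]
  have := uncountable_set_of_infinite ℤ
  exact ⟨hinj, not_countable_range_of_injective hinj⟩
end

section
/- Let S be an LPDS of the king grid with partner map m and let v ∈ S be in a far pair with v = (0,0), m(v) = (−1,−1). If every vertex of P(v) = N(v) \ N[m(v)] outside S has at most 2 neighbors in S and P(v) ∩ S = ∅, then there exist two distinct vertices in P(v) with exactly 2 neighbors in S that have the same neighborhood intersection with S — contradicting the locating property. Hence P(v) ∩ (T₃ ∪ S) ≠ ∅. -/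
/-! In the far position the pendant set is `P(v) = {(-1,1), (0,1), (1,1), (1,0), (1,-1)}`, and
every vertex of it is adjacent to `v = (0,0) ∈ S`. If `(0,1)` and `(1,0)` both saw only `v` in `S`,
they would not be located. Otherwise one of them, say `u`, has a second neighbour `s ∈ S`; as `s`
lies outside `P(v)`, it is also adjacent to another pendant vertex `w`. With at most two neighbours
in `S` each, `u` and `w` both see exactly `{v, s}`. -/

lemma mem_N_iff {a b x y : ℤ} :
    (x, y) ∈ N (a, b) ↔
      ¬(a = x ∧ b = y) ∧ -1 ≤ a - x ∧ a - x ≤ 1 ∧ -1 ≤ b - y ∧ b - y ≤ 1 := by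
  simp [N, kingGrid, Prod.ext_iff, abs_le, and_assoc]

lemma P_eq_of_far_pair {m : ℤ × ℤ → ℤ × ℤ} (hm : m (0, 0) = (-1, -1)) :
    P m (0, 0) = {(-1, 1), (0, 1), (1, 1), (1, 0), (1, -1)} := by
  ext ⟨x, y⟩
  simp only [P, Ncl, hm, Set.mem_sdiff, Set.mem_insert_iff, Set.mem_singleton_iff,
    show kingGrid.neighborSet (-1, -1) = N (-1, -1) from rfl, mem_N_iff, Prod.mk.injEq]
  omega

lemma Set.eq_pair_of_ncard_le_two {α : Type*} {A : Set α} (hA : A.Finite) (h : A.ncard ≤ 2)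
    {a b : α} (ha : a ∈ A) (hb : b ∈ A) (hab : a ≠ b) : A = {a, b} :=
  (Set.eq_of_subset_of_ncard_le (Set.pair_subset ha hb)
    (h.trans_eq (Set.ncard_pair hab).symm) hA).symm

lemma neighbors_inter_eq_of_two_common {S : Set (ℤ × ℤ)} {u w a b : ℤ × ℤ} (hab : a ≠ b)
    (hu : (N u ∩ S).ncard ≤ 2) (hw : (N w ∩ S).ncard ≤ 2)
    (hau : a ∈ N u ∩ S) (hbu : b ∈ N u ∩ S) (haw : a ∈ N w ∩ S) (hbw : b ∈ N w ∩ S) :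
    (N u ∩ S).ncard = 2 ∧ (N w ∩ S).ncard = 2 ∧ N u ∩ S = N w ∩ S := by
  have eu := Set.eq_pair_of_ncard_le_two ((N_finite u).inter_of_left S) hu hau hbu hab
  have ew := Set.eq_pair_of_ncard_le_two ((N_finite w).inter_of_left S) hw haw hbw hab
  rw [eu, ew, Set.ncard_pair hab]
  exact ⟨rfl, rfl, rfl⟩

lemma exists_pendant_adj_of_far_pair {m : ℤ × ℤ → ℤ × ℤ} (hm : m (0, 0) = (-1, -1))
    {u s : ℤ × ℤ} (hu : u = (0, 1) ∨ u = (1, 0)) (hs : s ∈ N u) (hs0 : s ≠ (0, 0))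
    (hsP : s ∉ P m (0, 0)) : ∃ w ∈ P m (0, 0), w ≠ u ∧ s ∈ N w := by
  obtain ⟨x, y⟩ := s
  simp only [P_eq_of_far_pair hm, Set.mem_insert_iff, Set.mem_singleton_iff, Prod.mk.injEq,
    ne_eq] at hsP hs0 ⊢
  rcases hu with rfl | rfl <;> rw [mem_N_iff] at hs
  · by_cases hx : x ≤ 0
    · exact ⟨(-1, 1), by simp, by simp, by rw [mem_N_iff]; omega⟩
    · exact ⟨(1, 1), by simp, by simp, by rw [mem_N_iff]; omega⟩
  · by_cases hy : y ≤ 0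
    · exact ⟨(1, -1), by simp, by simp, by rw [mem_N_iff]; omega⟩
    · exact ⟨(1, 1), by simp, by simp, by rw [mem_N_iff]; omega⟩

lemma exists_unlocated_pair_of_far_pair {S : Set (ℤ × ℤ)} {m : ℤ × ℤ → ℤ × ℤ}
    (hL : IsLocating S) (hv : ((0 : ℤ), (0 : ℤ)) ∈ S) (hm : m (0, 0) = (-1, -1))
    (hle : ∀ u ∈ P m (0, 0), u ∉ S → (N u ∩ S).ncard ≤ 2) (hPS : P m (0, 0) ∩ S = ∅) :
    ∃ u1 ∈ P m (0, 0), ∃ u2 ∈ P m (0, 0), u1 ≠ u2 ∧ u1 ∉ S ∧ u2 ∉ S ∧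
      (N u1 ∩ S).ncard = 2 ∧ (N u2 ∩ S).ncard = 2 ∧ N u1 ∩ S = N u2 ∩ S := by
  have hP := P_eq_of_far_pair hm
  have notS : ∀ u ∈ P m (0, 0), u ∉ S := fun u hu huS => hPS.subset ⟨hu, huS⟩
  have v_mem : ∀ u ∈ P m (0, 0), ((0 : ℤ), (0 : ℤ)) ∈ N u ∩ S := by
    rintro ⟨x, y⟩ hu
    refine ⟨mem_N_iff.mpr ?_, hv⟩
    simp only [hP, Set.mem_insert_iff, Set.mem_singleton_iff, Prod.mk.injEq] at hu
    omega
  have axis_mem : ∀ u : ℤ × ℤ, u = (0, 1) ∨ u = (1, 0) → u ∈ P m (0, 0) := by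
    rintro u (rfl | rfl) <;> simp [hP]
  by_cases h_second : ∃ u, (u = (0, 1) ∨ u = (1, 0)) ∧ ∃ s ∈ N u ∩ S, s ≠ (0, 0)
  · obtain ⟨u, hu, s, hs, hs0⟩ := h_second
    have huP := axis_mem u hu
    obtain ⟨w, hwP, hwu, hsw⟩ :=
      exists_pendant_adj_of_far_pair hm hu hs.1 hs0 fun hsP => notS s hsP hs.2
    exact ⟨u, huP, w, hwP, hwu.symm, notS u huP, notS w hwP,
      neighbors_inter_eq_of_two_common hs0.symm (hle u huP (notS u huP)) (hle w hwP (notS w hwP))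
        (v_mem u huP) hs (v_mem w hwP) ⟨hsw, hs.2⟩⟩
  · push Not at h_second
    have only_v : ∀ u : ℤ × ℤ, u = (0, 1) ∨ u = (1, 0) → N u ∩ S = {(0, 0)} := fun u hu =>
      Set.eq_singleton_iff_unique_mem.mpr ⟨v_mem u (axis_mem u hu), h_second u hu⟩
    exact absurd ((only_v _ (Or.inl rfl)).trans (only_v _ (Or.inr rfl)).symm)
      (hL _ _ (notS _ (axis_mem _ (Or.inl rfl))) (notS _ (axis_mem _ (Or.inr rfl))) (by decide))

theorem lemma_far_pair_normalized (S : Set (ℤ × ℤ)) (m : ℤ × ℤ → ℤ × ℤ)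
    (h : IsLPDS S m) (hv : ((0:ℤ), (0:ℤ)) ∈ S) (hm : m (0, 0) = (-1, -1)) :
    ((∀ u ∈ P m (0, 0), u ∉ S → (N u ∩ S).ncard ≤ 2) → P m (0, 0) ∩ S = ∅ →
      ∃ u1 ∈ P m (0, 0), ∃ u2 ∈ P m (0, 0), u1 ≠ u2 ∧ u1 ∉ S ∧ u2 ∉ S ∧
        (N u1 ∩ S).ncard = 2 ∧ (N u2 ∩ S).ncard = 2 ∧ N u1 ∩ S = N u2 ∩ S) ∧
    (P m (0, 0) ∩ ({u | u ∉ S ∧ 3 ≤ (N u ∩ S).ncard} ∪ S)).Nonempty := by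
  have twins := exists_unlocated_pair_of_far_pair h.2.1 hv hm
  refine ⟨twins, Set.nonempty_iff_ne_empty.mpr fun hempty => ?_⟩
  have hPS : P m (0, 0) ∩ S = ∅ :=
    Set.subset_eq_empty (Set.inter_subset_inter_right _ Set.subset_union_right) hempty
  have hle : ∀ u ∈ P m (0, 0), u ∉ S → (N u ∩ S).ncard ≤ 2 := fun u hu huS =>
    not_lt.mp fun h3 => hempty.subset ⟨hu, Or.inl ⟨huS, h3⟩⟩
  obtain ⟨u1, -, u2, -, hne, hu1, hu2, -, -, heq⟩ := twins hle hPS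
  exact h.2.1 u1 u2 hu1 hu2 hne heq
end
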